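/- arXiv:1407.3364 — 10 statements merged into one kernel-verified Lean document; each statement's English description precedes it below -/
import Mathlib

section
/- The map H of the plane defined by H(x,y) = (|x| - y, x) is periodic with period 9; that is, H^9 is the identity map and H^k is not the identity for 1 ≤ k < 9. -/
/-!
On each of the half-planes `x ≥ 0` and `x ≤ 0` the map is linear. Starting from a point
`(-a, -b)` with `a, b ≥ 0`, the sign of the first coordinate is forced at every step and the
orbit is
`(-a, -b), (a+b, -a), (2a+b, a+b), (a, 2a+b), (-a-b, a), (b, -a-b), (a+2b, b), (a+b, a+2b),
(-b, a+b), (-a, -b)`.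
So every point of the closed third quadrant has period 9, and the nine closed cones swept out by
this orbit cover the plane, so every point has period 9. The orbit of `(-1, 0)` shows that no
smaller iterate is the identity.
-/

def brownMap (p : ℝ × ℝ) : ℝ × ℝ := (|p.1| - p.2, p.1)

section Orbit

lemma brownMap_of_nonneg {x : ℝ} (hx : 0 ≤ x) (y : ℝ) : brownMap (x, y) = (x - y, x) := by
  rw [brownMap, abs_of_nonneg hx]

lemma brownMap_of_nonpos {x : ℝ} (hx : x ≤ 0) (y : ℝ) : brownMap (x, y) = (-x - y, x) := by
  rw [brownMap, abs_of_nonpos hx]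

attribute [local simp] brownMap_of_nonneg brownMap_of_nonpos Function.iterate_succ_apply'

lemma brownMap_iterate_nine_of_nonpos {x y : ℝ} (hx : x ≤ 0) (hy : y ≤ 0) :
    brownMap^[9] (x, y) = (x, y) := by
  simp (disch := grind); grind

lemma exists_nonpos_iterate_eq (p : ℝ × ℝ) :
    ∃ x y : ℝ, x ≤ 0 ∧ y ≤ 0 ∧ ∃ j, brownMap^[j] (x, y) = p := by
  obtain ⟨x, y⟩ := p
  -- the witnesses solve `brownMap^[j] (-a, -b) = (x, y)` for `a, b` on the `j`-th cone of the orbit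
  rcases le_total x 0 with hx | hx <;> rcases le_total y 0 with hy | hy
  · exact ⟨x, y, hx, hy, 0, rfl⟩
  · rcases le_total (x + y) 0 with hxy | hxy
    · exact ⟨-y, x + y, by linarith, hxy, 4, by simp (disch := grind)⟩
    · exact ⟨-x - y, x, by linarith, hx, 8, by simp (disch := grind); grind⟩
  · rcases le_total (x + y) 0 with hxy | hxy
    · exact ⟨x + y, -x, hxy, by linarith, 5, by simp (disch := grind); grind⟩
    · exact ⟨y, -x - y, hy, by linarith, 1, by simp (disch := grind); grind⟩
  · rcases le_total y x with hyx | hxy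
    · rcases le_total x (2 * y) with hx2y | h2yx
      · exact ⟨y - x, x - 2 * y, by linarith, by linarith, 2, by simp (disch := grind); grind⟩
      · exact ⟨2 * y - x, -y, by linarith, by linarith, 6, by simp (disch := grind); grind⟩
    · rcases le_total y (2 * x) with hy2x | h2xy
      · exact ⟨y - 2 * x, x - y, by linarith, by linarith, 7, by simp (disch := grind); grind⟩
      · exact ⟨-x, 2 * x - y, by linarith, by linarith, 3, by simp (disch := grind); grind⟩

end Orbit

lemma brownMap_iterate_nine : brownMap^[9] = id := by
  funext p
  obtain ⟨x, y, hx, hy, j, rfl⟩ := exists_nonpos_iterate_eq p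
  rw [id, ← Function.iterate_add_apply, add_comm, Function.iterate_add_apply,
    brownMap_iterate_nine_of_nonpos hx hy]

lemma brownMap_iterate_ne_of_lt_nine {k : ℕ} (hk : 1 ≤ k) (hk9 : k < 9) :
    brownMap^[k] (-1, 0) ≠ (-1, 0) := by
  interval_cases k <;> norm_num [brownMap]

theorem brown_map_period_nine
    (H : ℝ × ℝ → ℝ × ℝ)
    (hH : ∀ x y : ℝ, H (x, y) = (|x| - y, x)) :
    H^[9] = id ∧ ∀ k, 1 ≤ k → k < 9 → H^[k] ≠ id := by
  obtain rfl : H = brownMap := funext fun ⟨x, y⟩ => hH x y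
  exact ⟨brownMap_iterate_nine, fun k hk hk9 hid =>
    brownMap_iterate_ne_of_lt_nine hk hk9 (congrFun hid _)⟩
end

section
/- The recurrence h_{n+1} = |h_n| - h_{n-1} is periodic with period 9: for any real initial values h_0, h_1, the sequence satisfies h_{n+9} = h_n for all n. -/
/-!
The map `T (x, y) = (y, |y| - x)` advances the sequence by one step and is injective, so `T^[9] = id`
need only be checked at one point of each orbit. Every orbit enters the cone `x ≤ 0 ≤ y` within four
steps, and on that cone the orbit is piecewise linear with a single case split, on the sign of `x + y`.
-/

open Function

def brownStep (p : ℝ × ℝ) : ℝ × ℝ := (p.2, |p.2| - p.1)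

theorem brownStep_injective : Injective brownStep := by
  rintro ⟨a, b⟩ ⟨c, d⟩ h
  simp only [brownStep, Prod.mk.injEq] at h
  obtain ⟨rfl, h⟩ := h
  simp only [Prod.mk.injEq, and_true]
  linarith

theorem brownStep_of_nonneg {a b : ℝ} (hb : 0 ≤ b) : brownStep (a, b) = (b, b - a) := by
  simp [brownStep, abs_of_nonneg hb]

theorem brownStep_of_nonpos {a b : ℝ} (hb : b ≤ 0) : brownStep (a, b) = (b, -b - a) := by
  simp [brownStep, abs_of_nonpos hb]

/- The orbit runs through `(y, y - x), (y - x, -x), (-x, -y), (-y, x + y)`, then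
`(x + y, x + 2 * y), (x + 2 * y, y), (y, -x - y)` if `0 ≤ x + y` and
`(x + y, -x), (-x, -2 * x - y), (-2 * x - y, -x - y)` otherwise, and ends with `(-x - y, x), (x, y)`. -/
theorem brownStep_iterate_nine_of_nonpos_of_nonneg {x y : ℝ} (hx : x ≤ 0) (hy : 0 ≤ y) :
    brownStep^[9] (x, y) = (x, y) := by
  rcases le_total 0 (x + y) with hxy | hxy <;>
  simp (disch := grind) only [iterate_succ_apply, iterate_zero_apply, brownStep_of_nonneg,
    brownStep_of_nonpos] <;>
  exact Prod.ext (by ring) (by ring)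

theorem exists_iterate_brownStep_mem_of_snd_nonpos {p : ℝ × ℝ} (hp : p.2 ≤ 0) :
    ∃ k, (brownStep^[k] p).1 ≤ 0 ∧ 0 ≤ (brownStep^[k] p).2 := by
  obtain ⟨x, y⟩ := p
  by_cases h : 0 ≤ |y| - x
  · exact ⟨1, hp, h⟩
  · refine ⟨2, (not_le.mp h).le, ?_⟩
    simp only [iterate_succ_apply, iterate_zero_apply, brownStep]
    linarith [abs_nonneg (|y| - x)]

theorem exists_iterate_brownStep_mem (p : ℝ × ℝ) :
    ∃ k, (brownStep^[k] p).1 ≤ 0 ∧ 0 ≤ (brownStep^[k] p).2 := by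
  suffices ∃ m, (brownStep^[m] p).2 ≤ 0 ∨ (brownStep^[m] p).1 ≤ 0 ∧ 0 ≤ (brownStep^[m] p).2 by
    obtain ⟨m, hm | hm⟩ := this
    · obtain ⟨k, hk⟩ := exists_iterate_brownStep_mem_of_snd_nonpos hm
      exact ⟨k + m, by rwa [iterate_add_apply]⟩
    · exact ⟨m, hm⟩
  obtain ⟨x, y⟩ := p
  rcases le_total y 0 with hy | hy
  · exact ⟨0, Or.inl hy⟩
  rcases le_total x 0 with hx | hx
  · exact ⟨0, Or.inr ⟨hx, hy⟩⟩
  rcases le_total y x with hyx | hyx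
  · refine ⟨1, Or.inl ?_⟩
    rw [iterate_one, brownStep_of_nonneg hy]
    linarith
  · refine ⟨2, Or.inl ?_⟩
    rw [iterate_succ_apply, iterate_one, brownStep_of_nonneg hy,
      brownStep_of_nonneg (sub_nonneg.mpr hyx)]
    linarith

theorem brownStep_iterate_nine : brownStep^[9] = id := by
  funext p
  obtain ⟨k, hx, hy⟩ := exists_iterate_brownStep_mem p
  apply brownStep_injective.iterate k
  rw [← iterate_add_apply, add_comm, iterate_add_apply]
  exact brownStep_iterate_nine_of_nonpos_of_nonneg hx hy

theorem brown_recurrence_period_nine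
    (h : ℕ → ℝ)
    (hrec : ∀ n, 1 ≤ n → h (n + 1) = |h n| - h (n - 1)) :
    ∀ n, h (n + 9) = h n := by
  intro n
  have orbit : ∀ k, brownStep^[k] (h n, h (n + 1)) = (h (n + k), h (n + k + 1)) := by
    intro k
    induction k with
    | zero => rfl
    | succ k ih =>
      rw [iterate_succ_apply', ih, brownStep, ← add_assoc, hrec (n + k + 1) (by omega)]
      rfl
  simpa only [brownStep_iterate_nine, id] using (congrArg Prod.fst (orbit 9)).symm
end

section
/- The map G of the plane defined by G(x,y) = ((|x| + x)/2 - y, x) is periodic with period 5. -/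
/-!
Since `(|x| + x) / 2 = max x 0`, the map is piecewise linear, and `G^[5] = id` reduces to a linear
identity on each region cut out by the signs of the intermediate coordinates. As 5 is prime, a
point moved by `G` has minimal period exactly 5, so no `G^[k]` with `0 < k < 5` is the identity.
-/

open Function

theorem Function.iterate_ne_id_of_iterate_prime_eq_id {α : Type*} {f : α → α} {p k : ℕ}
    [Fact p.Prime] (hp : f^[p] = id) (hf : f ≠ id) (hk₀ : 0 < k) (hkp : k < p) :
    f^[k] ≠ id := by
  obtain ⟨x, hx⟩ := Function.ne_iff.mp hf
  have hmin : minimalPeriod f x = p := minimalPeriod_eq_prime (congrFun hp x) hx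
  intro hk
  have hdvd : p ∣ k := hmin ▸ IsPeriodicPt.minimalPeriod_dvd (congrFun hk x)
  exact Nat.not_dvd_of_pos_of_lt hk₀ hkp hdvd

/-- The tropicalization of the Lyness map `(x, y) ↦ ((1 + x) / y, x)`, whose period is also 5. -/
def tropicalLyness (p : ℝ × ℝ) : ℝ × ℝ := (max p.1 0 - p.2, p.1)

theorem abs_add_self_div_two (a : ℝ) : (|a| + a) / 2 = max a 0 := by
  rcases le_total 0 a with h | h
  · rw [abs_of_nonneg h, max_eq_left h]; ring
  · rw [abs_of_nonpos h, max_eq_right h]; ring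

theorem tropicalLyness_iterate_five : tropicalLyness^[5] = id := by
  funext ⟨x, y⟩
  simp only [iterate_succ, comp_apply, iterate_zero, id_eq, tropicalLyness, max_def,
    Prod.mk.injEq]
  split_ifs <;> constructor <;> linarith

theorem tropicalLyness_ne_id : tropicalLyness ≠ id := fun h => by
  simpa [tropicalLyness] using congrFun h (1, 1)

theorem G_map_period_five
    (G : ℝ × ℝ → ℝ × ℝ)
    (hG : ∀ x y : ℝ, G (x, y) = ((|x| + x) / 2 - y, x)) :
    G^[5] = id ∧ ∀ k, 1 ≤ k → k < 5 → G^[k] ≠ id := by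
  obtain rfl : G = tropicalLyness := funext fun ⟨x, y⟩ => by
    rw [hG, abs_add_self_div_two]; rfl
  have : Fact (Nat.Prime 5) := ⟨Nat.prime_five⟩
  exact ⟨tropicalLyness_iterate_five, fun k hk₁ hk₅ =>
    iterate_ne_id_of_iterate_prime_eq_id tropicalLyness_iterate_five tropicalLyness_ne_id hk₁ hk₅⟩
end

section
/- The recurrence f_{n+1} = (|f_n| - f_n)/2 - f_{n-1} is periodic with period 7: for any real initial values, f_{n+7} = f_n for all n. -/
/-!
The map `(x₀, x₁) ↦ (x₁, x₂)` is piecewise linear and positively homogeneous, with breaks only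
where `x₁ = 0`. The orbit of the ray through `(1, 0)` consists of the seven rays through
`(1, 0), (0, -1), (-1, 1), (1, 1), (1, -1), (-1, 0), (0, 1)`, which cut the plane into seven
sectors. Starting in one sector, the sign of every later term is determined, so the seven
steps compose to a linear map, and that map is the identity.
-/

variable {K : Type*} [Field K] [LinearOrder K] [IsStrictOrderedRing K]

lemma half_abs_sub_self_of_nonneg {a : K} (ha : 0 ≤ a) : (|a| - a) / 2 = 0 := by
  rw [abs_of_nonneg ha, sub_self, zero_div]

lemma half_abs_sub_self_of_nonpos {a : K} (ha : a ≤ 0) : (|a| - a) / 2 = -a := by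
  rw [abs_of_nonpos ha]
  ring

set_option maxHeartbeats 1000000 in
theorem abs_recurrence_seventh_eq_zeroth {x₀ x₁ x₂ x₃ x₄ x₅ x₆ x₇ : K}
    (h₂ : x₂ = (|x₁| - x₁) / 2 - x₀) (h₃ : x₃ = (|x₂| - x₂) / 2 - x₁)
    (h₄ : x₄ = (|x₃| - x₃) / 2 - x₂) (h₅ : x₅ = (|x₄| - x₄) / 2 - x₃)
    (h₆ : x₆ = (|x₅| - x₅) / 2 - x₄) (h₇ : x₇ = (|x₆| - x₆) / 2 - x₅) : x₇ = x₀ := by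
  revert h₂ h₃ h₄ h₅ h₆ h₇
  rcases le_total 0 x₀ <;> rcases le_total 0 x₁ <;>
    [rcases le_total x₀ x₁; rcases le_total 0 (x₀ + x₁); rcases le_total 0 (x₀ + x₁); skip] <;>
    repeat (intro h; first
      | rw [half_abs_sub_self_of_nonneg (by linarith)] at h
      | rw [half_abs_sub_self_of_nonpos (by linarith)] at h)
  all_goals linarith

theorem abs_recurrence_periodic (x : ℕ → K)
    (hx : ∀ n, x (n + 2) = (|x (n + 1)| - x (n + 1)) / 2 - x n) : Function.Periodic x 7 :=
  fun n => abs_recurrence_seventh_eq_zeroth (hx n) (hx (n + 1)) (hx (n + 2)) (hx (n + 3))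
    (hx (n + 4)) (hx (n + 5))

theorem F_recurrence_period_seven
    (f : ℕ → ℝ)
    (hrec : ∀ n, 1 ≤ n → f (n + 1) = (|f n| - f n) / 2 - f (n - 1)) :
    ∀ n, f (n + 7) = f n :=
  abs_recurrence_periodic f fun n => hrec (n + 1) n.succ_pos
end

section
/- (Crystallographic restriction) If A is a 2×2 matrix with integer entries and A^n = id for some natural number n ≥ 1, then the order of A is 1, 2, 3, 4 or 6. -/
/-!
By Cayley–Hamilton `A ^ 2 = t A - d` with `t = trace A` and `d = det A = ±1`, hence
`A ^ (k + 1) = U (k + 1) A - d U k` for the Lucas sequence `U` of `(t, d)`. If `1 ≤ t` and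
`d + 1 ≤ t` this sequence is positive, so `A ^ n = 1` makes a nonzero multiple of `A` scalar;
comparing trace and determinant then gives `A = 1`. Applied to `A` and `-A`, this leaves only
`(t, d) ∈ {(0, ±1), (±1, 1)}`, where the same formula gives `A ^ 4 = 1` or `A ^ 6 = 1`.
-/

open Matrix Polynomial

def lucasU {S : Type*} [CommRing S] (t d : S) : ℕ → S
  | 0 => 0
  | 1 => 1
  | k + 2 => t * lucasU t d (k + 1) - d * lucasU t d k

section LucasSequence

variable {S : Type*} [CommRing S] {t d : S}

theorem pow_succ_eq_lucasU {R : Type*} [Ring R] [Algebra S R] {x : R}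
    (hx : x ^ 2 = t • x - d • 1) (k : ℕ) :
    x ^ (k + 1) = lucasU t d (k + 1) • x - (d * lucasU t d k) • 1 := by
  induction k with
  | zero => simp [lucasU]
  | succ k ih =>
    rw [pow_succ', ih, mul_sub, mul_smul_comm, mul_smul_comm, ← pow_two, hx, mul_one]
    simp only [lucasU, sub_smul, mul_smul]
    module

theorem pow_succ_eq_one_of_lucasU {R : Type*} [Ring R] [Algebra S R] {x : R}
    (hx : x ^ 2 = t • x - d • 1) {k : ℕ} (hU : lucasU t d (k + 1) = 0)
    (hdU : d * lucasU t d k = -1) : x ^ (k + 1) = 1 := by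
  rw [pow_succ_eq_lucasU hx, hU, hdU]
  simp

theorem monotone_lucasU [LinearOrder S] [IsStrictOrderedRing S] (ht : 1 ≤ t)
    (htd : d + 1 ≤ t) : Monotone (lucasU t d) := by
  have hstep : ∀ k, 0 ≤ lucasU t d k ∧ lucasU t d k ≤ lucasU t d (k + 1) := by
    intro k
    induction k with
    | zero => simp [lucasU]
    | succ k ih =>
      obtain ⟨h0, hle⟩ := ih
      refine ⟨h0.trans hle, ?_⟩
      rw [show lucasU t d (k + 1 + 1) = t * lucasU t d (k + 1) - d * lucasU t d k from rfl]
      rcases le_total d 0 with hd | hd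
      · nlinarith
      · nlinarith
  exact monotone_nat_of_le_succ fun k => (hstep k).2

theorem one_le_lucasU [LinearOrder S] [IsStrictOrderedRing S] (ht : 1 ≤ t)
    (htd : d + 1 ≤ t) (k : ℕ) : 1 ≤ lucasU t d (k + 1) :=
  monotone_lucasU ht htd (Nat.le_add_left 1 k)

end LucasSequence

namespace Matrix

theorem sq_eq_trace_smul_sub_det_smul {R : Type*} [CommRing R] (A : Matrix (Fin 2) (Fin 2) R) :
    A ^ 2 = A.trace • A - A.det • 1 := by
  nontriviality R
  have hCH := A.aeval_self_charpoly
  rw [charpoly_fin_two] at hCH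
  rw [← sub_eq_zero, ← hCH]
  simp only [Algebra.smul_def, mul_one, map_add, aeval_sub, map_pow, aeval_X, map_mul, aeval_C]
  abel

theorem eq_one_of_pow_eq_one_of_le_trace {A : Matrix (Fin 2) (Fin 2) ℤ} {n : ℕ} (hn : n ≠ 0)
    (hA : A ^ n = 1) (ht : 1 ≤ A.trace) (htd : A.det + 1 ≤ A.trace) : A = 1 := by
  obtain ⟨k, rfl⟩ := Nat.exists_eq_succ_of_ne_zero hn
  set c := lucasU A.trace A.det (k + 1)
  set e := 1 + A.det * lucasU A.trace A.det k
  have hc : c ≠ 0 := (zero_lt_one.trans_le (one_le_lucasU ht htd k)).ne'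
  have hsmul : c • A = e • 1 := by
    have := pow_succ_eq_lucasU A.sq_eq_trace_smul_sub_det_smul k
    rw [hA] at this
    rw [add_smul, one_smul]
    exact sub_eq_iff_eq_add.1 this.symm
  have htrace : c * A.trace = 2 * e := by
    have := congrArg trace hsmul
    rw [trace_smul, trace_smul, trace_one] at this
    simpa [mul_comm] using this
  have hdet : c ^ 2 * A.det = e ^ 2 := by
    simpa only [det_smul, det_one, Fintype.card_fin, smul_eq_mul, mul_one] using congrArg det hsmul
  have hdisc : A.trace ^ 2 = 4 * A.det := by
    have : c ^ 2 * (A.trace ^ 2 - 4 * A.det) = 0 := by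
      linear_combination (c * A.trace + 2 * e) * htrace - 4 * hdet
    linarith [(mul_eq_zero.1 this).resolve_left (pow_ne_zero 2 hc)]
  have htwo : A.trace = 2 := by nlinarith
  have hce : e = c := by rw [htwo] at htrace; linarith
  rw [hce] at hsmul
  exact smul_right_injective _ hc hsmul

theorem det_eq_one_or_eq_neg_one_of_pow_eq_one {m : Type*} [Fintype m] [DecidableEq m]
    {A : Matrix m m ℤ} {n : ℕ} (hn : n ≠ 0) (hA : A ^ n = 1) : A.det = 1 ∨ A.det = -1 :=
  Int.isUnit_iff.1 <| IsUnit.of_pow_eq_one (by rw [← det_pow, hA, det_one]) hn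

theorem pow_four_eq_one_or_pow_six_eq_one {A : Matrix (Fin 2) (Fin 2) ℤ} {n : ℕ} (hn : n ≠ 0)
    (hA : A ^ n = 1) : A ^ 4 = 1 ∨ A ^ 6 = 1 := by
  have hdet := det_eq_one_or_eq_neg_one_of_pow_eq_one hn hA
  by_cases hpos : 1 ≤ A.trace ∧ A.det + 1 ≤ A.trace
  · simp [eq_one_of_pow_eq_one_of_le_trace hn hA hpos.1 hpos.2]
  by_cases hneg : 1 ≤ -A.trace ∧ A.det + 1 ≤ -A.trace
  · have hnegA : (-A) ^ (2 * n) = 1 := by rw [(even_two_mul n).neg_pow, pow_mul', hA, one_pow]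
    have hnegA_eq := eq_one_of_pow_eq_one_of_le_trace (by positivity) hnegA
      (by simpa using hneg.1) (by simpa [det_neg] using hneg.2)
    exact .inl (by rw [neg_eq_iff_eq_neg.1 hnegA_eq]; norm_num)
  have hsq := A.sq_eq_trace_smul_sub_det_smul
  have hcases : (A.trace = 0 ∧ A.det = 1) ∨ (A.trace = 0 ∧ A.det = -1) ∨
      (A.trace = 1 ∧ A.det = 1) ∨ (A.trace = -1 ∧ A.det = 1) := by omega
  rcases hcases with ⟨ht, hd⟩ | ⟨ht, hd⟩ | ⟨ht, hd⟩ | ⟨ht, hd⟩ <;> rw [ht, hd] at hsq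
  · exact .inl (pow_succ_eq_one_of_lucasU (k := 3) hsq (by decide) (by decide))
  · exact .inl (pow_succ_eq_one_of_lucasU (k := 3) hsq (by decide) (by decide))
  · exact .inr (pow_succ_eq_one_of_lucasU (k := 5) hsq (by decide) (by decide))
  · exact .inr (pow_succ_eq_one_of_lucasU (k := 5) hsq (by decide) (by decide))

end Matrix

theorem crystallographic_restriction
    (A : Matrix (Fin 2) (Fin 2) ℤ) (n : ℕ) (hn : 1 ≤ n) (hA : A ^ n = 1) :
    orderOf A ∈ ({1, 2, 3, 4, 6} : Set ℕ) := by
  have hdvd : orderOf A ∈ Nat.divisors 4 ∪ Nat.divisors 6 := by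
    rcases Matrix.pow_four_eq_one_or_pow_six_eq_one (by omega) hA with h | h <;>
      simp [orderOf_dvd_of_pow_eq_one h]
  rw [show Nat.divisors 4 ∪ Nat.divisors 6 = {1, 2, 3, 4, 6} by decide] at hdvd
  simpa using hdvd
end

section
/- Let f be the piecewise linear map given by A₁ = [[a,-1],[1,0]] on the half plane x ≥ 0 and A₂ = [[b,-1],[1,0]] on x < 0, with integers a, b ≤ -2. Then f is not periodic; in fact the orbit of (1,0) has strictly decreasing ratios: writing (x_{m+1}, x_m) = f^m(1,0), one has x_{m+1}/x_m < -1 for all m ≥ 1. -/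
/-!
Along the orbit of `(1, 0)` the second coordinates satisfy `x₀ = 0`, `x₁ = 1` and
`x_{m+2} = c_m x_{m+1} - x_m` with `c_m ∈ {a, b}`, so `c_m ≤ -2` whichever half plane the point
lies in. For the ratios `r_m = x_{m+1} / x_m` this reads `r_{m+1} = c_m - 1 / r_m`; once
`r_m < -1` we have `0 < -1 / r_m < 1`, hence `r_{m+1} < c_m + 1 ≤ -1`, and `r₁ = c₀ ≤ -2`
starts the induction. In particular `x_n ≠ 0` for `n ≥ 1`, so the orbit never returns to `(1, 0)`.
-/

lemma mul_sub_div_lt_neg_one_of_div_lt_neg_one {c u v : ℝ} (hc : c ≤ -2) (h : v / u < -1) :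
    (c * v - u) / v < -1 := by
  have hv : v ≠ 0 := by rintro rfl; norm_num at h
  have hinv : -1 < u / v := by
    rw [← inv_div, ← inv_neg_one]
    exact (inv_lt_inv_of_neg (by norm_num) (by linarith)).mpr h
  calc (c * v - u) / v = c - u / v := by field_simp
    _ < -1 := by linarith

lemma succ_div_lt_neg_one_of_recurrence {x : ℕ → ℝ} (h0 : x 0 = 0) (h1 : x 1 ≠ 0)
    (hrec : ∀ m, ∃ c : ℝ, c ≤ -2 ∧ x (m + 2) = c * x (m + 1) - x m) :
    ∀ m, 1 ≤ m → x (m + 1) / x m < -1 := by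
  intro m hm
  induction m, hm using Nat.le_induction with
  | base =>
    obtain ⟨c, hc, hx2⟩ := hrec 0
    rw [hx2, h0, sub_zero, mul_div_cancel_right₀ c h1]
    linarith
  | succ m _ ih =>
    obtain ⟨c, hc, hx⟩ := hrec m
    rw [hx]
    exact mul_sub_div_lt_neg_one_of_div_lt_neg_one hc ih

section

variable {f : ℝ × ℝ → ℝ × ℝ} (hf : ∀ p : ℝ × ℝ, ∃ c : ℝ, c ≤ -2 ∧ f p = (c * p.1 - p.2, p.1))
include hf

lemma orbit_succ_div_lt_neg_one {s : ℝ} (hs : s ≠ 0) {x : ℕ → ℝ}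
    (hx : ∀ m, f^[m] (s, 0) = (x (m + 1), x m)) :
    ∀ m, 1 ≤ m → x (m + 1) / x m < -1 := by
  have hx₀ := hx 0
  simp only [Function.iterate_zero, id, Prod.mk.injEq] at hx₀
  refine succ_div_lt_neg_one_of_recurrence hx₀.2.symm (hx₀.1 ▸ hs) fun m => ?_
  obtain ⟨c, hc, hfc⟩ := hf (x (m + 1), x m)
  refine ⟨c, hc, ?_⟩
  have hstep := hx (m + 1)
  rw [Function.iterate_succ_apply', hx m, hfc, Prod.mk.injEq] at hstep
  exact hstep.1.symm

lemma iterate_ne_id {n : ℕ} (hn : 1 ≤ n) : f^[n] ≠ id := by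
  intro hid
  have hsnd : ∀ p, (f p).2 = p.1 := fun p => by
    obtain ⟨c, -, hfc⟩ := hf p
    rw [hfc]
  have horbit : ∀ m, f^[m] (1, 0) = ((f^[m + 1] (1, 0)).2, (f^[m] (1, 0)).2) := fun m => by
    rw [Function.iterate_succ_apply', hsnd]
  have hratio := orbit_succ_div_lt_neg_one hf one_ne_zero (x := fun m => (f^[m] (1, 0)).2) horbit n hn
  rw [hid, id, div_zero] at hratio
  norm_num at hratio

end

lemma exists_coeff_le_neg_two_of_piecewise {a b : ℝ} (ha : a ≤ -2) (hb : b ≤ -2)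
    {f : ℝ × ℝ → ℝ × ℝ}
    (hpos : ∀ x y : ℝ, 0 ≤ x → f (x, y) = (a * x - y, x))
    (hneg : ∀ x y : ℝ, x < 0 → f (x, y) = (b * x - y, x)) :
    ∀ p : ℝ × ℝ, ∃ c : ℝ, c ≤ -2 ∧ f p = (c * p.1 - p.2, p.1) := by
  rintro ⟨x, y⟩
  rcases le_or_gt 0 x with hx | hx
  · exact ⟨a, ha, hpos x y hx⟩
  · exact ⟨b, hb, hneg x y hx⟩

theorem both_traces_le_neg_two_not_periodic
    (a b : ℤ) (ha : a ≤ -2) (hb : b ≤ -2)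
    (f : ℝ × ℝ → ℝ × ℝ)
    (hpos : ∀ x y : ℝ, 0 ≤ x → f (x, y) = ((a : ℝ) * x - y, x))
    (hneg : ∀ x y : ℝ, x < 0 → f (x, y) = ((b : ℝ) * x - y, x)) :
    (∀ n : ℕ, 1 ≤ n → f^[n] ≠ id) ∧
    ∀ x : ℕ → ℝ, (∀ m : ℕ, f^[m] (1, 0) = (x (m + 1), x m)) →
      ∀ m : ℕ, 1 ≤ m → x (m + 1) / x m < -1 := by
  have hf := exists_coeff_le_neg_two_of_piecewise (by exact_mod_cast ha) (by exact_mod_cast hb)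
    hpos hneg
  exact ⟨fun n hn => iterate_ne_id hf hn,
    fun x hx => orbit_succ_div_lt_neg_one hf one_ne_zero hx⟩
end

section
/- Let f be the piecewise linear map given by A₁ = [[0,-1],[1,0]] on x ≥ 0 and A₂ = [[b,-1],[1,0]] on x < 0 with integer b ≤ -3. Then f is not periodic. -/
/-!
Let `l = (b - √(b² - 4)) / 2` be the root of `l² = b l - 1` with `l < -1`. The orbit of the
eigenvector `(l, 1)` of `A₂` runs through the quadrants in the order II, IV, I, II, IV, I and
returns after six steps to `l² • (l, 1)`. Since `f` commutes with positive scalings,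
`f^[6 n] (l, 1) = l^(2 n) • (l, 1)`, and `l² > 1` rules out `f^[n] = id`.
-/

open Function

theorem Function.iterate_apply_eq_pow_smul {M α : Type*} [Monoid M] [MulAction M α]
    {g : α → α} {c : M} (hcomm : Function.Commute (c • ·) g) {v : α} (hv : g v = c • v)
    (n : ℕ) : g^[n] v = c ^ n • v := by
  induction n with
  | zero => simp
  | succ n ih =>
    rw [iterate_succ_apply, hv, ← (hcomm.iterate_right n).eq, ih, ← mul_smul, pow_succ']

theorem exists_root_lt_neg_one {β : ℝ} (hβ : β < -2) :
    ∃ l : ℝ, l < -1 ∧ l ^ 2 = β * l - 1 := by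
  have hs : √(β ^ 2 - 4) ^ 2 = β ^ 2 - 4 := Real.sq_sqrt (by nlinarith)
  refine ⟨(β - √(β ^ 2 - 4)) / 2, by linarith [Real.sqrt_nonneg (β ^ 2 - 4)], ?_⟩
  linear_combination hs / 4

theorem commute_smul_of_pos {β : ℝ} {f : ℝ × ℝ → ℝ × ℝ}
    (hpos : ∀ x y : ℝ, 0 ≤ x → f (x, y) = (-y, x))
    (hneg : ∀ x y : ℝ, x < 0 → f (x, y) = (β * x - y, x)) {c : ℝ} (hc : 0 < c) :
    Function.Commute (c • ·) f := by
  rintro ⟨x, y⟩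
  rcases le_or_gt 0 x with hx | hx
  · simp [hpos x y hx, hpos (c * x) (c * y) (by positivity)]
  · simp [hneg x y hx, hneg (c * x) (c * y) (mul_neg_of_pos_of_neg hc hx)]
    ring

theorem iterate_six_apply_root_one {β : ℝ} {f : ℝ × ℝ → ℝ × ℝ}
    (hpos : ∀ x y : ℝ, 0 ≤ x → f (x, y) = (-y, x))
    (hneg : ∀ x y : ℝ, x < 0 → f (x, y) = (β * x - y, x)) {l : ℝ} (hl : l < 0)
    (hroot : l ^ 2 = β * l - 1) :
    f^[6] (l, 1) = l ^ 2 • (l, 1) := by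
  have hl2 : 0 < l ^ 2 := by nlinarith
  have hl3 : l ^ 3 < 0 := Odd.pow_neg (by decide) hl
  have h1 : f (l, 1) = (l ^ 2, l) := by
    rw [hneg l 1 hl, hroot]
  have h2 : f (l ^ 2, l) = (-l, l ^ 2) := hpos _ _ hl2.le
  have h3 : f (-l, l ^ 2) = (-l ^ 2, -l) := hpos _ _ (by linarith)
  have h4 : f (-l ^ 2, -l) = (-l ^ 3, -l ^ 2) := by
    rw [hneg _ _ (by linarith)]
    congr 1
    linear_combination l * hroot
  have h5 : f (-l ^ 3, -l ^ 2) = (l ^ 2, -l ^ 3) := by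
    rw [hpos _ _ (by linarith), neg_neg]
  have h6 : f (l ^ 2, -l ^ 3) = (l ^ 3, l ^ 2) := by
    rw [hpos _ _ hl2.le, neg_neg]
  simp only [iterate_succ_apply', iterate_zero_apply, h1, h2, h3, h4, h5, h6, Prod.smul_mk,
    smul_eq_mul, mul_one]
  ring_nf

theorem a_zero_b_le_neg_three_not_periodic
    (b : ℤ) (hb : b ≤ -3)
    (f : ℝ × ℝ → ℝ × ℝ)
    (hpos : ∀ x y : ℝ, 0 ≤ x → f (x, y) = (-y, x))
    (hneg : ∀ x y : ℝ, x < 0 → f (x, y) = ((b : ℝ) * x - y, x)) :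
    ∀ n : ℕ, 1 ≤ n → f^[n] ≠ id := by
  intro n hn hid
  have hb' : (b : ℝ) < -2 := by exact_mod_cast (show b < -2 by omega)
  obtain ⟨l, hl, hroot⟩ := exists_root_lt_neg_one hb'
  have hcomm : Function.Commute (l ^ 2 • ·) f^[6] :=
    (commute_smul_of_pos hpos hneg (by nlinarith)).iterate_right 6
  have horbit := iterate_apply_eq_pow_smul hcomm
    (iterate_six_apply_root_one hpos hneg (by linarith) hroot) n
  rw [← iterate_mul, mul_comm, iterate_mul, hid, iterate_id, id] at horbit
  have hone : (1 : ℝ) = (l ^ 2) ^ n := by simpa using congrArg Prod.snd horbit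
  have hgt : 1 < (l ^ 2) ^ n := one_lt_pow₀ (by nlinarith) (by omega)
  linarith
end

section
/- Let f be the piecewise linear map given by A₁ = [[1,-1],[1,0]] on x ≥ 0 and A₂ = [[b,-1],[1,0]] on x < 0 with integer b ≤ -3. Then f is not periodic. -/
/-!
Four steps of `f` map the cone `{(x, y) | 0 < y ≤ -x}` into itself: the orbit of `(x, y)` visits
the half plane `x ≥ 0` three times and comes back as `(-b x + y, -x)`. Since `b ≤ -3`, this
strictly decreases the first coordinate, so the orbit of `(-1, 1)` never returns, whereas
`f^[n] = id` would force `f^[4 n] (-1, 1) = (-1, 1)`.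
-/

open Function Set

theorem Function.iterate_apply_ne_self_of_mapsTo {α β : Type*} [Preorder β] {g : α → α}
    {s : Set α} {φ : α → β} (hs : MapsTo g s s) (hφ : ∀ x ∈ s, φ (g x) < φ x) {x : α}
    (hx : x ∈ s) {n : ℕ} (hn : 1 ≤ n) : g^[n] x ≠ x := by
  have hanti : StrictAnti fun m => φ (g^[m] x) := strictAnti_nat_of_succ_lt fun m => by
    simpa only [iterate_succ_apply'] using hφ _ (hs.iterate m hx)
  intro hfix
  simpa [hfix] using hanti hn

def negCone : Set (ℝ × ℝ) := {q | 0 < q.2 ∧ q.2 ≤ -q.1}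

theorem iterate_four_apply_of_mem_negCone {β : ℝ} (hβ : β ≤ -1) {f : ℝ × ℝ → ℝ × ℝ}
    (hpos : ∀ x y : ℝ, 0 ≤ x → f (x, y) = (x - y, x))
    (hneg : ∀ x y : ℝ, x < 0 → f (x, y) = (β * x - y, x))
    {q : ℝ × ℝ} (hq : q ∈ negCone) : f^[4] q = (-β * q.1 + q.2, -q.1) := by
  obtain ⟨x, y⟩ := q
  obtain ⟨hy, hyx⟩ : 0 < y ∧ y ≤ -x := hq
  set s := β * x - y
  have hs : 0 ≤ s := by nlinarith [mul_nonneg (by linarith : 0 ≤ -β - 1) (by linarith : 0 ≤ -x)]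
  have h₁ : f (x, y) = (s, x) := hneg _ _ (by linarith)
  have h₂ : f (s, x) = (s - x, s) := hpos _ _ hs
  have h₃ : f (s - x, s) = (-x, s - x) := by rw [hpos _ _ (by linarith)]; congr 1; ring
  have h₄ : f (-x, s - x) = (-s, -x) := by rw [hpos _ _ (by linarith)]; congr 1; ring
  change f (f (f (f (x, y)))) = _
  rw [h₁, h₂, h₃, h₄]
  congr 1
  ring

theorem mapsTo_iterate_four_negCone {β : ℝ} (hβ : β < -2) {f : ℝ × ℝ → ℝ × ℝ}
    (hpos : ∀ x y : ℝ, 0 ≤ x → f (x, y) = (x - y, x))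
    (hneg : ∀ x y : ℝ, x < 0 → f (x, y) = (β * x - y, x)) :
    MapsTo f^[4] negCone negCone := by
  intro q hq
  rw [iterate_four_apply_of_mem_negCone (by linarith) hpos hneg hq]
  obtain ⟨hy, hyx⟩ := hq
  constructor <;> dsimp only <;> nlinarith

theorem fst_iterate_four_lt_of_mem_negCone {β : ℝ} (hβ : β < -2) {f : ℝ × ℝ → ℝ × ℝ}
    (hpos : ∀ x y : ℝ, 0 ≤ x → f (x, y) = (x - y, x))
    (hneg : ∀ x y : ℝ, x < 0 → f (x, y) = (β * x - y, x))
    {q : ℝ × ℝ} (hq : q ∈ negCone) : (f^[4] q).1 < q.1 := by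
  rw [iterate_four_apply_of_mem_negCone (by linarith) hpos hneg hq]
  obtain ⟨hy, hyx⟩ := hq
  dsimp only
  nlinarith

theorem a_one_b_le_neg_three_not_periodic
    (b : ℤ) (hb : b ≤ -3)
    (f : ℝ × ℝ → ℝ × ℝ)
    (hpos : ∀ x y : ℝ, 0 ≤ x → f (x, y) = (x - y, x))
    (hneg : ∀ x y : ℝ, x < 0 → f (x, y) = ((b : ℝ) * x - y, x)) :
    ∀ n : ℕ, 1 ≤ n → f^[n] ≠ id := by
  intro n hn hperiodic
  have hβ : (b : ℝ) < -2 := by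
    have : (b : ℝ) ≤ -3 := by exact_mod_cast hb
    linarith
  have hstart : ((-1, 1) : ℝ × ℝ) ∈ negCone := by norm_num [negCone]
  refine iterate_apply_ne_self_of_mapsTo (mapsTo_iterate_four_negCone hβ hpos hneg)
    (fun q hq => fst_iterate_four_lt_of_mem_negCone hβ hpos hneg hq) hstart hn ?_
  rw [← iterate_mul, mul_comm, iterate_mul, hperiodic, iterate_id, id]
end

section
/- Let f be the piecewise linear map given by A₁ = [[-1,-1],[1,0]] on x ≥ 0 and A₂ = [[b,-1],[1,0]] on x < 0 with integer b ≤ -4. Then f is not periodic. -/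
/-!
Under `f ∘ f` the region `x ≤ -1, 0 ≤ y ≤ -2x - 2` is mapped into itself: a point of it is sent by
`A₂` into the half-plane `x ≥ 0` and then by `A₁` back into the region, with `x` decreased by at
least `2`. So the orbit of `(-1, 0)` never returns, and no iterate of `f` is the identity.
-/

open Function Set

theorem iterate_ne_id_of_mapsTo_of_lt {α β : Type*} [Preorder β] {g : α → α} {S : Set α}
    (φ : α → β) (hS : MapsTo g S S) (hφ : ∀ p ∈ S, φ (g p) < φ p) {p : α} (hp : p ∈ S)
    {n : ℕ} (hn : n ≠ 0) : g^[n] ≠ id := by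
  intro hid
  have hanti : StrictAnti fun k ↦ φ (g^[k] p) := strictAnti_nat_of_succ_lt fun k ↦ by
    simpa only [iterate_succ_apply'] using hφ _ (hS.iterate k hp)
  simpa [hid] using hanti (Nat.pos_of_ne_zero hn)

def trappingRegion : Set (ℝ × ℝ) := {p | p.1 ≤ -1 ∧ 0 ≤ p.2 ∧ p.2 ≤ -2 * p.1 - 2}

section PiecewiseLinear

variable {b : ℝ} {f : ℝ × ℝ → ℝ × ℝ}

theorem iterate_two_eq_of_mem_trappingRegion (hb : b ≤ -4)
    (hpos : ∀ x y : ℝ, 0 ≤ x → f (x, y) = (-x - y, x))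
    (hneg : ∀ x y : ℝ, x < 0 → f (x, y) = (b * x - y, x))
    {x y : ℝ} (hp : (x, y) ∈ trappingRegion) :
    f^[2] (x, y) = (-(b * x - y) - x, b * x - y) := by
  obtain ⟨hx, hy, hyx⟩ := hp
  have hbx : -4 * x ≤ b * x := by nlinarith
  rw [iterate_succ_apply', iterate_one, hneg x y (by linarith), hpos _ _ (by linarith)]

theorem mapsTo_iterate_two_trappingRegion (hb : b ≤ -4)
    (hpos : ∀ x y : ℝ, 0 ≤ x → f (x, y) = (-x - y, x))
    (hneg : ∀ x y : ℝ, x < 0 → f (x, y) = (b * x - y, x)) :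
    MapsTo f^[2] trappingRegion trappingRegion := by
  rintro ⟨x, y⟩ hp
  rw [iterate_two_eq_of_mem_trappingRegion hb hpos hneg hp]
  obtain ⟨hx, hy, hyx⟩ := hp
  have hbx : -4 * x ≤ b * x := by nlinarith
  exact ⟨by linarith, by linarith, by linarith⟩

theorem fst_iterate_two_lt_of_mem_trappingRegion (hb : b ≤ -4)
    (hpos : ∀ x y : ℝ, 0 ≤ x → f (x, y) = (-x - y, x))
    (hneg : ∀ x y : ℝ, x < 0 → f (x, y) = (b * x - y, x))
    {p : ℝ × ℝ} (hp : p ∈ trappingRegion) : (f^[2] p).1 < p.1 := by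
  obtain ⟨x, y⟩ := p
  rw [iterate_two_eq_of_mem_trappingRegion hb hpos hneg hp]
  obtain ⟨hx, hy, hyx⟩ := hp
  have hbx : -4 * x ≤ b * x := by nlinarith
  dsimp only
  linarith

end PiecewiseLinear

theorem a_neg_one_b_le_neg_four_not_periodic
    (b : ℤ) (hb : b ≤ -4)
    (f : ℝ × ℝ → ℝ × ℝ)
    (hpos : ∀ x y : ℝ, 0 ≤ x → f (x, y) = (-x - y, x))
    (hneg : ∀ x y : ℝ, x < 0 → f (x, y) = ((b : ℝ) * x - y, x)) :
    ∀ n : ℕ, 1 ≤ n → f^[n] ≠ id := by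
  intro n hn hid
  have hb' : (b : ℝ) ≤ -4 := by exact_mod_cast hb
  have h_two_periodic : (f^[2])^[n] = id := by
    rw [← iterate_mul, mul_comm, iterate_mul, hid, iterate_id]
  refine iterate_ne_id_of_mapsTo_of_lt Prod.fst (mapsTo_iterate_two_trappingRegion hb' hpos hneg)
    (fun p ↦ fst_iterate_two_lt_of_mem_trappingRegion hb' hpos hneg)
    (p := (-1, 0)) (by norm_num [trappingRegion]) (by omega) h_two_periodic
end

section
/- Every admissible sequence m_0, …, m_{n-1} of a piecewise linear periodic map of period n ≥ 3 and rotation number 1/n has sum equal to 3n - 12. Equivalently, if e_0, …, e_{n-1} ∈ ℤ² are vertices of a fundamental polygon (consecutive determinants det[e_i, e_{i+1}] = 1 for all i mod n, vectors in anticlockwise order) with e_{i-1} + e_{i+1} = m_i e_i, then Σ_{i=0}^{n-1} m_i = 3n - 12. -/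
/-!
By unimodularity `m_{i+1} = det[e_i, e_{i+2}]`. If some `m_{v+1} = 1` then
`e_{v+1} = e_v + e_{v+2}`, and deleting `e_{v+1}` (a blow-down) leaves a fundamental polygon
with `n - 1` vertices in which the two neighbouring entries drop by one, so the sum drops by `3`.
For `n ≥ 5` such a vertex exists: `m_{v+1} ≤ 0` forces the angle from `e_v` to `e_{v+2}` to be at
least `π`, while along a run of entries `≥ 2` the determinants `det[e_s, e_{s+j}]` increase
convexly, so the run turns by less than `π`; as one period turns by exactly `2π`, the two
cannot be fitted together. The cases `n = 3, 4` are checked directly.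
-/

open Real Finset Function

theorem Real.lt_pi_of_sin_pos_of_lt_two_pi {x : ℝ} (hs : 0 < sin x) (hx : x < 2 * π) : x < π := by
  by_contra! h
  have := sin_nonpos_of_nonpos_of_neg_pi_le (x := x - 2 * π) (by linarith) (by linarith)
  rw [sin_sub_two_pi] at this
  linarith

theorem Function.Periodic.sum_range_comp_add {M : Type*} [AddCancelCommMonoid M] {F : ℕ → M}
    {n : ℕ} (hF : Periodic F n) (s : ℕ) : ∑ i ∈ range n, F (i + s) = ∑ i ∈ range n, F i := by
  induction s with
  | zero => rfl
  | succ s ih =>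
    have h := (sum_range_succ' (fun i => F (i + s)) n).symm.trans (sum_range_succ _ n)
    rw [zero_add, add_comm n s, hF s] at h
    rw [← ih, ← add_right_cancel h]
    simp only [add_right_comm _ 1 s, add_assoc]

theorem lt_succ_of_recurrence_of_two_le {R : Type*} [CommRing R] [LinearOrder R]
    [IsStrictOrderedRing R] {D a : ℕ → R} {k : ℕ} (h0 : 0 ≤ D 0) (h01 : D 0 < D 1)
    (hrec : ∀ j, D j + D (j + 2) = a j * D (j + 1)) (ha : ∀ j < k, 2 ≤ a j) :
    ∀ j ≤ k, 0 ≤ D j ∧ D j < D (j + 1) := by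
  intro j hj
  induction j with
  | zero => exact ⟨h0, h01⟩
  | succ j ih =>
    obtain ⟨hD, hlt⟩ := ih (by omega)
    have hconvex : 2 * D (j + 1) ≤ a j * D (j + 1) :=
      mul_le_mul_of_nonneg_right (ha j (by omega)) (by linarith)
    have := hrec j
    exact ⟨by linarith, by linarith⟩

section Det2

variable {R : Type*} [CommRing R]

def det2 (a b : R × R) : R := a.1 * b.2 - a.2 * b.1

theorem det2_swap (a b : R × R) : det2 b a = -det2 a b := by
  unfold det2; ring

@[simp]
theorem det2_self (a : R × R) : det2 a a = 0 := by
  unfold det2; ring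

theorem det2_add_right (a b c : R × R) : det2 a (b + c) = det2 a b + det2 a c := by
  simp only [det2, Prod.fst_add, Prod.snd_add]; ring

theorem det2_sub_left (a b c : R × R) : det2 (a - b) c = det2 a c - det2 b c := by
  simp only [det2, Prod.fst_sub, Prod.snd_sub]; ring

theorem det2_smul_right (a b : R × R) (m : R) : det2 a (m • b) = m * det2 a b := by
  simp only [det2, Prod.smul_fst, Prod.smul_snd, smul_eq_mul]; ring

theorem det2_eq_of_add_eq_smul {a b c : R × R} {m : R} (hab : det2 a b = 1)
    (h : a + c = m • b) : det2 a c = m := by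
  have := congrArg (det2 a) h
  rwa [det2_add_right, det2_self, zero_add, det2_smul_right, hab, mul_one] at this

theorem add_eq_det2_smul {a b c : R × R} (hab : det2 a b = 1) (hbc : det2 b c = 1) :
    a + c = det2 a c • b := by
  unfold det2 at *
  ext
  · simp only [Prod.fst_add, Prod.smul_fst, smul_eq_mul]
    linear_combination -c.1 * hab - a.1 * hbc
  · simp only [Prod.snd_add, Prod.smul_snd, smul_eq_mul]
    linear_combination -c.2 * hab - a.2 * hbc

end Det2

theorem sum_det2_add_two_of_period_three {e : ℕ → ℤ × ℤ} (hper : Periodic e 3)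
    (hdet : ∀ i, det2 (e i) (e (i + 1)) = 1) : ∑ i ∈ range 3, det2 (e i) (e (i + 2)) = -3 := by
  have h : ∀ i, det2 (e i) (e (i + 2)) = -1 := fun i => by
    have := hdet (i + 2)
    rw [add_assoc, hper i, det2_swap] at this
    omega
  simp only [sum_range_succ, sum_range_zero, h]
  norm_num

theorem sum_det2_add_two_of_period_four {e : ℕ → ℤ × ℤ} (hper : Periodic e 4) :
    ∑ i ∈ range 4, det2 (e i) (e (i + 2)) = 0 := by
  have h : ∀ i, det2 (e (i + 2)) (e (i + 2 + 2)) = -det2 (e i) (e (i + 2)) := fun i => by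
    rw [add_assoc, hper i, det2_swap]
  have h0 := h 0
  have h1 := h 1
  simp only [sum_range_succ, sum_range_zero]
  norm_num at h0 h1 ⊢
  rw [h0, h1]
  ring

-- `blowDownIndex n` enumerates, increasingly, the naturals that are not `≡ n [MOD n + 1]`.
def blowDownIndex (n i : ℕ) : ℕ := i + i / n

theorem strictMono_blowDownIndex (n : ℕ) : StrictMono (blowDownIndex n) :=
  strictMono_id.add_monotone fun _ _ h => Nat.div_le_div_right h

theorem blowDownIndex_of_lt {n i : ℕ} (h : i < n) : blowDownIndex n i = i := by
  simp [blowDownIndex, Nat.div_eq_of_lt h]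

theorem blowDownIndex_add_self {n : ℕ} (hn : 0 < n) (i : ℕ) :
    blowDownIndex n (i + n) = blowDownIndex n i + (n + 1) := by
  simp only [blowDownIndex, Nat.add_div_right i hn]
  ring

theorem sum_det2_blowDownIndex {e : ℕ → ℤ × ℤ} {k : ℕ} (hdet : ∀ i, det2 (e i) (e (i + 1)) = 1)
    (h : det2 (e (k + 1)) (e (k + 3)) = 1) :
    ∑ i ∈ range (k + 2), det2 (e (blowDownIndex (k + 2) i)) (e (blowDownIndex (k + 2) (i + 2))) =
      ∑ i ∈ range (k + 3), det2 (e i) (e (i + 2)) - 3 := by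
  have hrel : e (k + 1) + e (k + 3) = e (k + 2) := by
    simpa [h] using add_eq_det2_smul (hdet (k + 1)) (hdet (k + 2))
  have hwrap : ∀ i < k + 2, blowDownIndex (k + 2) (i + (k + 2)) = i + k + 3 := fun i hi => by
    rw [blowDownIndex_add_self (by omega), blowDownIndex_of_lt hi]
    ring
  have hlow : ∀ i ∈ range k, det2 (e (blowDownIndex (k + 2) i)) (e (blowDownIndex (k + 2) (i + 2)))
      = det2 (e i) (e (i + 2)) := fun i hi => by
    rw [mem_range] at hi
    rw [blowDownIndex_of_lt (by omega), blowDownIndex_of_lt (by omega)]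
  have hk : det2 (e k) (e (k + 3)) = det2 (e k) (e (k + 2)) - 1 := by
    rw [← hrel, det2_add_right, hdet k]
    ring
  have hk1 : det2 (e (k + 1)) (e (k + 4)) = det2 (e (k + 2)) (e (k + 4)) - 1 := by
    rw [eq_sub_of_add_eq hrel, det2_sub_left, hdet (k + 3)]
  have h0 := hwrap 0 (by omega)
  have h1 := hwrap 1 (by omega)
  simp only [sum_range_succ, sum_congr rfl hlow, blowDownIndex_of_lt (show k < k + 2 by omega),
    blowDownIndex_of_lt (show k + 1 < k + 2 by omega)]
  simp only [zero_add, add_comm 1, show k + 2 + 1 = k + 3 from rfl] at h0 h1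
  rw [h0, h1, hk, hk1, h]
  ring

-- The polar angle `θ` is a lift to `ℝ`, not reduced mod `2π`: one period turns exactly once.
structure IsFundamentalPolygon (n : ℕ) (e : ℕ → ℤ × ℤ) (r θ : ℕ → ℝ) : Prop where
  periodic : Periodic e n
  det2_succ : ∀ i, det2 (e i) (e (i + 1)) = 1
  radius_pos : ∀ i, 0 < r i
  strictMono_angle : StrictMono θ
  angle_add_period : ∀ i, θ (i + n) = θ i + 2 * π
  fst_eq : ∀ i, ((e i).1 : ℝ) = r i * cos (θ i)
  snd_eq : ∀ i, ((e i).2 : ℝ) = r i * sin (θ i)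

namespace IsFundamentalPolygon

variable {n : ℕ} {e : ℕ → ℤ × ℤ} {r θ : ℕ → ℝ}

theorem comp {N : ℕ} (P : IsFundamentalPolygon N e r θ) {σ : ℕ → ℕ} (hσ : StrictMono σ)
    (hσn : ∀ i, σ (i + n) = σ i + N) (hdet : ∀ i, det2 (e (σ i)) (e (σ (i + 1))) = 1) :
    IsFundamentalPolygon n (e ∘ σ) (r ∘ σ) (θ ∘ σ) where
  periodic i := by simp only [comp_apply, hσn, P.periodic (σ i)]
  det2_succ := hdet
  radius_pos _ := P.radius_pos _
  strictMono_angle := P.strictMono_angle.comp hσ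
  angle_add_period i := by simp only [comp_apply, hσn, P.angle_add_period]
  fst_eq _ := P.fst_eq _
  snd_eq _ := P.snd_eq _

theorem shift (P : IsFundamentalPolygon n e r θ) (s : ℕ) :
    IsFundamentalPolygon n (fun i => e (i + s)) (fun i => r (i + s)) (fun i => θ (i + s)) :=
  P.comp (σ := (· + s)) (strictMono_id.add_const s) (fun i => add_right_comm i n s)
    (fun i => by simpa only [add_right_comm i 1 s] using P.det2_succ (i + s))

theorem three_le_period (P : IsFundamentalPolygon n e r θ) : 3 ≤ n := by
  by_contra! h
  interval_cases n
  · simpa using P.angle_add_period 0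
  · have := P.det2_succ 0
    rw [P.periodic 0, det2_self] at this
    exact zero_ne_one this
  · have h01 := P.det2_succ 0
    have h12 := P.det2_succ 1
    rw [show 1 + 1 = 0 + 2 from rfl, P.periodic 0, det2_swap] at h12
    rw [zero_add] at h01
    omega

theorem det2_eq_mul_sin (P : IsFundamentalPolygon n e r θ) (i j : ℕ) :
    ((det2 (e i) (e j) : ℤ) : ℝ) = r i * r j * sin (θ j - θ i) := by
  simp only [det2]
  push_cast
  rw [P.fst_eq, P.snd_eq, P.fst_eq, P.snd_eq, sin_sub]
  ring

theorem det2_pos_iff (P : IsFundamentalPolygon n e r θ) (i j : ℕ) :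
    0 < det2 (e i) (e j) ↔ 0 < sin (θ j - θ i) := by
  rw [← Int.cast_pos (R := ℝ), P.det2_eq_mul_sin,
    mul_pos_iff_of_pos_left (mul_pos (P.radius_pos i) (P.radius_pos j))]

theorem angle_sub_lt_pi_of_det2_pos (P : IsFundamentalPolygon n e r θ) {i j : ℕ}
    (h : 0 < det2 (e i) (e j)) (h2 : θ j - θ i < 2 * π) : θ j - θ i < π :=
  lt_pi_of_sin_pos_of_lt_two_pi ((P.det2_pos_iff i j).mp h) h2

theorem angle_succ_sub_lt_pi (P : IsFundamentalPolygon n e r θ) (i : ℕ) :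
    θ (i + 1) - θ i < π := by
  refine P.angle_sub_lt_pi_of_det2_pos (by rw [P.det2_succ]; exact one_pos) ?_
  have := P.strictMono_angle (show i + 1 < i + n by have := P.three_le_period; omega)
  linarith [P.angle_add_period i]

theorem pi_le_angle_of_det2_nonpos (P : IsFundamentalPolygon n e r θ) {v : ℕ}
    (h : det2 (e v) (e (v + 2)) ≤ 0) : π ≤ θ (v + 2) - θ v := by
  by_contra! hlt
  have hpos : 0 < θ (v + 2) - θ v := sub_pos.mpr (P.strictMono_angle (by omega))
  exact h.not_gt ((P.det2_pos_iff _ _).mpr (sin_pos_of_pos_of_lt_pi hpos hlt))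

theorem det2_pos_of_separated (P : IsFundamentalPolygon n e r θ) (hn : 5 ≤ n) {v w : ℕ}
    (hv : det2 (e v) (e (v + 2)) ≤ 0) (hvw : v + 2 ≤ w) (hwv : w + 2 ≤ v + n) :
    0 < det2 (e w) (e (w + 2)) := by
  by_contra! hw
  have hv' := P.pi_le_angle_of_det2_nonpos hv
  have hw' := P.pi_le_angle_of_det2_nonpos hw
  have hturn := P.angle_add_period v
  have mono := P.strictMono_angle
  -- two disjoint arcs of length `≥ π` in one turn, and `n ≥ 5` leaves a gap outside both
  rcases (by omega : v + 2 < w ∨ w + 2 < v + n) with h | h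
  · linarith [mono h, mono.monotone hwv]
  · linarith [mono.monotone hvw, mono h]

theorem angle_sub_lt_pi_of_two_le (P : IsFundamentalPolygon n e r θ) {s k : ℕ}
    (h : ∀ j < k, 2 ≤ det2 (e (s + j)) (e (s + j + 2))) : θ (s + k + 1) - θ s < π := by
  have hrec : ∀ j, det2 (e s) (e (s + j)) + det2 (e s) (e (s + (j + 2))) =
      det2 (e (s + j)) (e (s + j + 2)) * det2 (e s) (e (s + (j + 1))) := fun j => by
    have := congrArg (det2 (e s)) (add_eq_det2_smul (P.det2_succ (s + j)) (P.det2_succ (s + j + 1)))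
    rwa [det2_add_right, det2_smul_right] at this
  have hD := lt_succ_of_recurrence_of_two_le (D := fun j => det2 (e s) (e (s + j)))
    (by simp) (by simp [P.det2_succ s]) hrec h
  suffices ∀ j ≤ k, θ (s + j + 1) - θ s < π from this k le_rfl
  intro j hj
  induction j with
  | zero => exact P.angle_succ_sub_lt_pi s
  | succ j ih =>
    obtain ⟨hnonneg, hlt⟩ := hD (j + 1) hj
    simp only [← add_assoc] at hnonneg hlt ⊢
    refine P.angle_sub_lt_pi_of_det2_pos (by linarith) ?_
    linarith [ih (by omega), P.angle_succ_sub_lt_pi (s + j + 1)]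

theorem exists_det2_eq_one (P : IsFundamentalPolygon n e r θ) (hn : 5 ≤ n) :
    ∃ v, det2 (e v) (e (v + 2)) = 1 := by
  by_contra! hne
  obtain ⟨u, hu⟩ : ∃ u, ∀ j < n - 2, 0 < det2 (e (u + 1 + j)) (e (u + 1 + j + 2)) := by
    by_cases hall : ∀ v, 0 < det2 (e v) (e (v + 2))
    · exact ⟨0, fun j _ => hall _⟩
    obtain ⟨v, hv⟩ := not_forall.mp hall
    have hsep := fun w => P.det2_pos_of_separated hn (not_lt.mp hv) (w := w)
    by_cases hv1 : 0 < det2 (e (v + 1)) (e (v + 1 + 2))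
    · refine ⟨v, fun j hj => ?_⟩
      rcases j with _ | j
      · exact hv1
      · exact hsep _ (by omega) (by omega)
    · refine ⟨v + 1, fun j hj => ?_⟩
      rcases j with _ | j
      · exact hsep _ (by omega) (by omega)
      · exact P.det2_pos_of_separated hn (not_lt.mp hv1) (by omega) (by omega)
  have hrun := P.angle_sub_lt_pi_of_two_le (s := u + 1) (k := n - 2) fun j hj => by
    have := hu j hj
    have := hne (u + 1 + j)
    omega
  rw [show u + 1 + (n - 2) + 1 = u + n by omega, P.angle_add_period] at hrun
  linarith [P.angle_succ_sub_lt_pi u]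

theorem blowDown {k : ℕ} (P : IsFundamentalPolygon (k + 3) e r θ)
    (h : det2 (e (k + 1)) (e (k + 3)) = 1) :
    IsFundamentalPolygon (k + 2) (e ∘ blowDownIndex (k + 2)) (r ∘ blowDownIndex (k + 2))
      (θ ∘ blowDownIndex (k + 2)) := by
  have hσ := blowDownIndex_add_self (n := k + 2) (by omega)
  refine P.comp (strictMono_blowDownIndex _) hσ fun i => ?_
  have hper : Periodic (fun i => det2 (e (blowDownIndex (k + 2) i))
      (e (blowDownIndex (k + 2) (i + 1)))) (k + 2) := fun i => by
    simp only [add_right_comm i (k + 2) 1, hσ, P.periodic _]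
  rw [← hper.map_mod_nat]
  have hi := Nat.mod_lt i (show 0 < k + 2 by omega)
  rw [blowDownIndex_of_lt hi]
  rcases (by omega : i % (k + 2) + 1 < k + 2 ∨ i % (k + 2) = k + 1) with hj | hj
  · rw [blowDownIndex_of_lt hj]
    exact P.det2_succ _
  · have hk : blowDownIndex (k + 2) (k + 2) = k + 3 := by
      simpa [blowDownIndex_of_lt] using hσ 0
    rw [hj]
    simpa [hk] using h

theorem sum_det2_add_two (P : IsFundamentalPolygon n e r θ) :
    ∑ i ∈ range n, det2 (e i) (e (i + 2)) = 3 * n - 12 := by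
  induction n using Nat.strong_induction_on generalizing e r θ with
  | _ n ih =>
  obtain h | h | h : n = 3 ∨ n = 4 ∨ 5 ≤ n := by have := P.three_le_period; omega
  · subst h
    rw [sum_det2_add_two_of_period_three P.periodic P.det2_succ]
    norm_num
  · subst h
    rw [sum_det2_add_two_of_period_four P.periodic]
    norm_num
  obtain ⟨v, hv⟩ := P.exists_det2_eq_one h
  obtain ⟨k, rfl⟩ : ∃ k, n = k + 3 := ⟨n - 3, by omega⟩
  -- shift so that the vertex to delete sits at index `k + 2`
  have Q := P.shift (v + 2)
  have hQ : det2 (e (k + 1 + (v + 2))) (e (k + 3 + (v + 2))) = 1 := by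
    rwa [show k + 1 + (v + 2) = v + (k + 3) by omega,
      show k + 3 + (v + 2) = v + 2 + (k + 3) by omega, P.periodic, P.periodic]
  have hM : Periodic (fun i => det2 (e i) (e (i + 2))) (k + 3) := fun i => by
    simp only [add_right_comm i (k + 3) 2, P.periodic _]
  have hsum := ih (k + 2) (by omega) (Q.blowDown hQ)
  simp only [comp_apply] at hsum
  rw [sum_det2_blowDownIndex Q.det2_succ hQ] at hsum
  simp only [add_right_comm _ 2 (v + 2), hM.sum_range_comp_add (v + 2)] at hsum
  push_cast at hsum ⊢
  linarith

end IsFundamentalPolygon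

def periodicLift (n : ℕ) (c : ℝ) (θ : ℕ → ℝ) (i : ℕ) : ℝ := θ (i % n) + (i / n : ℕ) * c

section PeriodicLift

variable {n : ℕ} {c : ℝ} {θ : ℕ → ℝ}

theorem periodicLift_add_self (hn : 0 < n) (i : ℕ) :
    periodicLift n c θ (i + n) = periodicLift n c θ i + c := by
  simp only [periodicLift, Nat.add_mod_right, Nat.add_div_right i hn]
  push_cast
  ring

theorem periodicLift_of_le (hn : 0 < n) (hc : θ n = θ 0 + c) {i : ℕ} (hi : i ≤ n) :
    periodicLift n c θ i = θ i := by
  rcases hi.lt_or_eq with hi | rfl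
  · simp [periodicLift, Nat.mod_eq_of_lt hi, Nat.div_eq_of_lt hi]
  · simp [periodicLift, Nat.div_self hn, hc]

theorem strictMono_periodicLift (hn : 0 < n) (hθ : ∀ i < n, θ i < θ (i + 1))
    (hc : θ n = θ 0 + c) : StrictMono (periodicLift n c θ) := by
  refine strictMono_nat_of_lt_succ fun i => ?_
  have hper : Periodic (fun i => periodicLift n c θ (i + 1) - periodicLift n c θ i) n :=
    fun i => by simp only [add_right_comm i n 1, periodicLift_add_self hn]; ring
  have hi := Nat.mod_lt i hn
  have := hper.map_mod_nat i
  simp only [periodicLift_of_le hn hc hi.le, periodicLift_of_le hn hc hi] at this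
  linarith [hθ _ hi]

end PeriodicLift

theorem admissible_sequence_sum_general
    (n : ℕ)
    (e : ℕ → ℤ × ℤ) (m : ℕ → ℤ)
    (hper : ∀ i, e (i + n) = e i)
    -- consecutive determinants equal 1
    (hdet : ∀ i, (e i).1 * (e (i + 1)).2 - (e i).2 * (e (i + 1)).1 = 1)
    -- the vectors are arranged in anticlockwise order, winding once around the origin
    (hacw : ∃ r θ : ℕ → ℝ, (∀ i, 0 < r i) ∧ (∀ i, θ i < θ (i + 1)) ∧
      θ n = θ 0 + 2 * Real.pi ∧
      ∀ i, ((e i).1 : ℝ) = r i * Real.cos (θ i) ∧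
           ((e i).2 : ℝ) = r i * Real.sin (θ i))
    (hm : ∀ i, e i + e (i + 2) = m (i + 1) • e (i + 1)) :
    ∑ i ∈ Finset.range n, m (i + 1) = 3 * (n : ℤ) - 12 := by
  obtain ⟨r, θ, hr, hθ, hθn, hpolar⟩ := hacw
  have hn : 0 < n := Nat.pos_of_ne_zero fun h => by subst h; linarith [pi_pos]
  have hper : Periodic e n := hper
  have P : IsFundamentalPolygon n e (fun i => r (i % n)) (periodicLift n (2 * π) θ) :=
    { periodic := hper
      det2_succ := hdet
      radius_pos := fun _ => hr _
      strictMono_angle := strictMono_periodicLift hn (fun i _ => hθ i) hθn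
      angle_add_period := periodicLift_add_self hn
      fst_eq := fun i => by
        rw [periodicLift, cos_add_nat_mul_two_pi, ← (hpolar _).1, hper.map_mod_nat]
      snd_eq := fun i => by
        rw [periodicLift, sin_add_nat_mul_two_pi, ← (hpolar _).2, hper.map_mod_nat] }
  rw [sum_congr rfl fun i _ => (det2_eq_of_add_eq_smul (hdet i) (hm i)).symm]
  exact P.sum_det2_add_two

theorem admissible_sequence_sum
    (n : ℕ) (hn : 3 ≤ n)
    (e : ℕ → ℤ × ℤ) (m : ℕ → ℤ)
    (hper : ∀ i, e (i + n) = e i)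
    -- consecutive determinants equal 1
    (hdet : ∀ i, (e i).1 * (e (i + 1)).2 - (e i).2 * (e (i + 1)).1 = 1)
    -- the vectors are arranged in anticlockwise order, winding once around the origin
    (hacw : ∃ r θ : ℕ → ℝ, (∀ i, 0 < r i) ∧ (∀ i, θ i < θ (i + 1)) ∧
      θ n = θ 0 + 2 * Real.pi ∧
      ∀ i, ((e i).1 : ℝ) = r i * Real.cos (θ i) ∧
           ((e i).2 : ℝ) = r i * Real.sin (θ i))
    (hm : ∀ i, e i + e (i + 2) = m (i + 1) • e (i + 1)) :
    ∑ i ∈ Finset.range n, m (i + 1) = 3 * (n : ℤ) - 12 :=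
  admissible_sequence_sum_general n e m hper hdet hacw hm
end
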